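/- arXiv:2405.13912 — 4 statements merged into one kernel-verified Lean document; each statement's English description precedes it below -/
import Mathlib

section
/- Let Ξ̄ and Σ̄ be real random variables supported on compact subsets of (0,∞), let α > 0 and γ > 0. Define F : [0,∞)² → ℝ by F(q_u, q_v) = E[(αγ q_v Ξ̄⁻²)/(1 + αγ q_v Ξ̄⁻¹)] and G(q_u, q_v) = E[(γ q_u Σ̄⁻²)/(1 + γ q_u Σ̄⁻¹)]. Then (0,0) always satisfies q_u = F(q_u,q_v), q_v = G(q_u,q_v); moreover there exists a solution with q_u > 0 and q_v > 0 if and only if α γ² E[Σ̄⁻²] E[Ξ̄⁻²] > 1, and in that case the strictly positive solution is unique. -/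
open MeasureTheory

noncomputable def phi (c t y : ℝ) : ℝ := c * t * y^2 / (1 + c * t * y)

section pointwise
variable {p q c y t s : ℝ}

lemma denom_pos (hc : 0 < c) (ht : 0 ≤ t) (hy : 0 < y) : 0 < 1 + c * t * y := by
  have : 0 ≤ c * t * y := by positivity
  linarith

lemma phi_nonneg (hc : 0 < c) (ht : 0 ≤ t) (hy : 0 < y) : 0 ≤ phi c t y :=
  div_nonneg (by positivity) (denom_pos hc ht hy).le

lemma phi_le_lin (hc : 0 < c) (ht : 0 ≤ t) (hy : 0 < y) :
    phi c t y ≤ c * t * y^2 := by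
  have : 0 ≤ c * t * y := by positivity
  exact div_le_self (by positivity) (by linarith)

lemma phi_lt_lin (hc : 0 < c) (ht : 0 < t) (hp : 0 < p) (hyp : p ≤ y) (hyq : y ≤ q) :
    phi c t y + c^2 * t^2 * p^3 / (1 + c * t * q) ≤ c * t * y^2 := by
  have hy : 0 < y := hp.trans_le hyp
  have hd := denom_pos hc ht.le hy
  have key : c * t * y^2 - phi c t y = c^2 * t^2 * y^3 / (1 + c * t * y) := by
    unfold phi; field_simp; try ring
  have h2 : c^2 * t^2 * p^3 / (1 + c * t * q) ≤ c^2 * t^2 * y^3 / (1 + c * t * y) := by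
    gcongr <;> try first | exact mul_nonneg (by positivity) hts | exact hp.le
  linarith

lemma phi_ge_quad (hc : 0 < c) (ht : 0 ≤ t) (hy : 0 < y) (hyq : y ≤ q) :
    c * t * y^2 - c^2 * t^2 * q^3 ≤ phi c t y := by
  have hd := denom_pos hc ht hy
  have key : phi c t y - (c * t * y^2 - c^2 * t^2 * y^3) =
      c^3 * t^3 * y^4 / (1 + c * t * y) := by
    unfold phi; field_simp; try ring
  have h1 : 0 ≤ c^3 * t^3 * y^4 / (1 + c * t * y) := by positivity
  have h2 : c^2 * t^2 * y^3 ≤ c^2 * t^2 * q^3 := by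
    have : y^3 ≤ q^3 := by gcongr <;> try exact hy.le
    nlinarith [sq_nonneg (c*t)]
  linarith

lemma phi_le_bound (hc : 0 < c) (ht : 0 ≤ t) (hy : 0 < y) (hyq : y ≤ q) :
    phi c t y ≤ q := by
  have hd := denom_pos hc ht hy
  have h1 : phi c t y ≤ y := by
    rw [phi, div_le_iff₀ hd]; nlinarith
  linarith

lemma phi_sub_eq (hc : 0 < c) (ht : 0 ≤ t) (hs : 0 ≤ s) (hy : 0 < y) :
    phi c t y - phi c s y =
      c * y^2 * (t - s) / ((1 + c * t * y) * (1 + c * s * y)) := by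
  have hdt := denom_pos hc ht hy
  have hds := denom_pos hc hs hy
  unfold phi; field_simp; ring

lemma phi_strict_mono (hc : 0 < c) (hs : 0 ≤ s) (hst : s < t) (hp : 0 < p)
    (hyp : p ≤ y) (hyq : y ≤ q) :
    phi c s y + c * p^2 * (t - s) / ((1 + c * t * q) * (1 + c * s * q)) ≤ phi c t y := by
  have hy : 0 < y := hp.trans_le hyp
  have ht : 0 ≤ t := hs.trans hst.le
  have hts : (0:ℝ) ≤ t - s := by linarith
  have hq : 0 < q := hy.trans_le hyq
  have hdt := denom_pos hc ht hy
  have hds := denom_pos hc hs hy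
  have key := phi_sub_eq hc ht hs hy
  have h2 : c * p^2 * (t - s) / ((1 + c * t * q) * (1 + c * s * q)) ≤
      c * y^2 * (t - s) / ((1 + c * t * y) * (1 + c * s * y)) := by
    gcongr <;> try first | exact mul_nonneg (by positivity) hts | exact hp.le
  linarith

lemma phi_lip (hc : 0 < c) (ht : 0 ≤ t) (hs : 0 ≤ s) (hy : 0 < y) (hyq : y ≤ q) :
    |phi c t y - phi c s y| ≤ c * q^2 * |t - s| := by
  have hdt := denom_pos hc ht hy
  have hds := denom_pos hc hs hy
  rw [phi_sub_eq hc ht hs hy, abs_div, abs_mul, abs_mul]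
  have h1 : 0 ≤ c * t * y := by positivity
  have h2 : 0 ≤ c * s * y := by positivity
  have hD : (1:ℝ) ≤ (1 + c * t * y) * (1 + c * s * y) := by nlinarith
  rw [abs_of_pos (by positivity : (0:ℝ) < (1 + c * t * y) * (1 + c * s * y))]
  calc |c| * |y^2| * |t - s| / ((1 + c * t * y) * (1 + c * s * y))
      ≤ |c| * |y^2| * |t - s| := div_le_self (by positivity) hD
    _ = c * y^2 * |t - s| := by
        rw [abs_of_pos hc, abs_of_pos (by positivity : (0:ℝ) < y^2)]
    _ ≤ c * q^2 * |t - s| := by gcongr <;> try exact hy.le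

lemma phi_ratio (hc : 0 < c) (hs : 0 < s) (hst : s < t) (hp : 0 < p)
    (hyp : p ≤ y) (hyq : y ≤ q) :
    s * phi c t y + c^2 * s * t * p^3 * (t - s) / ((1 + c * t * q) * (1 + c * s * q))
      ≤ t * phi c s y := by
  have hy : 0 < y := hp.trans_le hyp
  have ht : 0 < t := hs.trans hst
  have hq : 0 < q := hy.trans_le hyq
  have hts : (0:ℝ) ≤ t - s := by linarith
  have hdt := denom_pos hc ht.le hy
  have hds := denom_pos hc hs.le hy
  have key : t * phi c s y - s * phi c t y =
      c^2 * s * t * y^3 * (t - s) / ((1 + c * t * y) * (1 + c * s * y)) := by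
    unfold phi; field_simp; ring
  have h2 : c^2 * s * t * p^3 * (t - s) / ((1 + c * t * q) * (1 + c * s * q)) ≤
      c^2 * s * t * y^3 * (t - s) / ((1 + c * t * y) * (1 + c * s * y)) := by
    gcongr <;> try first | exact mul_nonneg (by positivity) hts | exact hp.le
  linarith

end pointwise


section integral
variable {Ω : Type*} [MeasurableSpace Ω] {μ : Measure Ω} [IsProbabilityMeasure μ]
  {X : Ω → ℝ} {a b c t s : ℝ}

lemma meas_phi (hXm : Measurable X) (c t : ℝ) :
    Measurable fun ω => phi c t ((X ω)⁻¹) := by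
  unfold phi; fun_prop

lemma intg_sq (hXm : Measurable X) (ha : 0 < a) (hX : ∀ ω, X ω ∈ Set.Icc a b) :
    Integrable (fun ω => ((X ω)⁻¹)^2) μ := by
  apply Integrable.mono' (integrable_const ((a⁻¹)^2))
    (hXm.inv.pow_const 2).aestronglyMeasurable
  refine ae_of_all _ fun ω => ?_
  have h1 := (hX ω).1
  have hx0 : 0 < X ω := lt_of_lt_of_le ha h1
  rw [Real.norm_eq_abs, abs_of_nonneg (by positivity)]
  have := inv_anti₀ ha h1
  change ((X ω)⁻¹)^2 ≤ (a⁻¹)^2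
  gcongr
end integral
section integral2
variable {Ω : Type*} [MeasurableSpace Ω] {μ : Measure Ω} [IsProbabilityMeasure μ]
  {X : Ω → ℝ} {a b c t s : ℝ}

lemma ybnd (ha : 0 < a) (hX : ∀ ω, X ω ∈ Set.Icc a b) (ω : Ω) :
    0 < (X ω)⁻¹ ∧ b⁻¹ ≤ (X ω)⁻¹ ∧ (X ω)⁻¹ ≤ a⁻¹ := by
  have h1 := (hX ω).1
  have h2 := (hX ω).2
  have hx0 : 0 < X ω := lt_of_lt_of_le ha h1
  exact ⟨inv_pos.mpr hx0, inv_anti₀ hx0 h2, inv_anti₀ ha h1⟩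

lemma intg_phi (hXm : Measurable X) (ha : 0 < a) (hX : ∀ ω, X ω ∈ Set.Icc a b)
    (hc : 0 < c) (ht : 0 ≤ t) :
    Integrable (fun ω => phi c t ((X ω)⁻¹)) μ := by
  apply Integrable.mono' (integrable_const (c * t * (a⁻¹)^2))
    (meas_phi hXm c t).aestronglyMeasurable
  refine ae_of_all _ fun ω => ?_
  obtain ⟨hy, hyp, hyq⟩ := ybnd ha hX ω
  rw [Real.norm_eq_abs, abs_of_nonneg (phi_nonneg hc ht hy)]
  calc phi c t ((X ω)⁻¹) ≤ c * t * ((X ω)⁻¹)^2 := phi_le_lin hc ht hy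
    _ ≤ c * t * (a⁻¹)^2 := by gcongr <;> try exact hy.le

lemma int_f_nonneg (ha : 0 < a) (hX : ∀ ω, X ω ∈ Set.Icc a b)
    (hc : 0 < c) (ht : 0 ≤ t) :
    0 ≤ ∫ ω, phi c t ((X ω)⁻¹) ∂μ :=
  integral_nonneg fun ω => phi_nonneg hc ht (ybnd ha hX ω).1

lemma int_f_le_lin (hXm : Measurable X) (ha : 0 < a) (hX : ∀ ω, X ω ∈ Set.Icc a b)
    (hc : 0 < c) (ht : 0 ≤ t) :
    ∫ ω, phi c t ((X ω)⁻¹) ∂μ ≤ c * t * ∫ ω, ((X ω)⁻¹)^2 ∂μ := by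
  rw [← MeasureTheory.integral_const_mul]
  exact integral_mono (μ := μ) (intg_phi hXm ha hX hc ht) ((intg_sq hXm ha hX).const_mul _)
    fun ω => phi_le_lin hc ht (ybnd ha hX ω).1

lemma int_f_lt_lin (hXm : Measurable X) (ha : 0 < a) (hb : 0 < b)
    (hX : ∀ ω, X ω ∈ Set.Icc a b) (hc : 0 < c) (ht : 0 < t) :
    ∫ ω, phi c t ((X ω)⁻¹) ∂μ < c * t * ∫ ω, ((X ω)⁻¹)^2 ∂μ := by
  set δ : ℝ := c^2 * t^2 * (b⁻¹)^3 / (1 + c * t * a⁻¹) with hδ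
  have hd1 : (0:ℝ) < 1 + c * t * a⁻¹ := denom_pos hc ht.le (inv_pos.mpr ha)
  have hδpos : 0 < δ := div_pos (by positivity) hd1
  have key : (∫ ω, phi c t ((X ω)⁻¹) ∂μ) + δ ≤ c * t * ∫ ω, ((X ω)⁻¹)^2 ∂μ := by
    rw [← MeasureTheory.integral_const_mul]
    have h2 := integral_mono (μ := μ) ((intg_phi hXm ha hX hc ht.le).add (integrable_const δ))
      ((intg_sq hXm ha hX).const_mul (c * t))
      (fun ω => by
        obtain ⟨hy, hyp, hyq⟩ := ybnd ha hX ω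
        exact phi_lt_lin hc ht (inv_pos.mpr hb) hyp hyq)
    simp only [Pi.add_apply] at h2
    rw [integral_add (intg_phi hXm ha hX hc ht.le) (integrable_const δ)] at h2
    simpa using h2
  linarith

lemma int_f_ge_quad (hXm : Measurable X) (ha : 0 < a) (hX : ∀ ω, X ω ∈ Set.Icc a b)
    (hc : 0 < c) (ht : 0 ≤ t) :
    c * t * (∫ ω, ((X ω)⁻¹)^2 ∂μ) - c^2 * t^2 * (a⁻¹)^3 ≤ ∫ ω, phi c t ((X ω)⁻¹) ∂μ := by
  have h2 := integral_mono (μ := μ)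
    (((intg_sq hXm ha hX).const_mul (c * t)).sub (integrable_const (c^2 * t^2 * (a⁻¹)^3)))
    (intg_phi hXm ha hX hc ht)
    (fun ω => by
      obtain ⟨hy, hyp, hyq⟩ := ybnd ha hX ω
      exact phi_ge_quad hc ht hy hyq)
  simp only [Pi.sub_apply] at h2
  rw [integral_sub ((intg_sq hXm ha hX).const_mul (c * t)) (integrable_const _),
    MeasureTheory.integral_const_mul] at h2
  simpa using h2

lemma int_f_le_bound (hXm : Measurable X) (ha : 0 < a) (hX : ∀ ω, X ω ∈ Set.Icc a b)
    (hc : 0 < c) (ht : 0 ≤ t) :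
    ∫ ω, phi c t ((X ω)⁻¹) ∂μ ≤ a⁻¹ := by
  have h2 := integral_mono (μ := μ) (intg_phi hXm ha hX hc ht) (integrable_const (a⁻¹))
    (fun ω => by
      obtain ⟨hy, hyp, hyq⟩ := ybnd ha hX ω
      exact phi_le_bound hc ht hy hyq)
  simpa using h2

lemma int_f_zero : ∫ ω, phi c 0 ((X ω)⁻¹) ∂μ = 0 := by
  simp [phi]

lemma int_f_strict_mono (hXm : Measurable X) (ha : 0 < a) (hb : 0 < b)
    (hX : ∀ ω, X ω ∈ Set.Icc a b) (hc : 0 < c) (hs : 0 ≤ s) (hst : s < t) :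
    ∫ ω, phi c s ((X ω)⁻¹) ∂μ < ∫ ω, phi c t ((X ω)⁻¹) ∂μ := by
  have ht : 0 ≤ t := hs.trans hst.le
  have hts : (0:ℝ) < t - s := by linarith
  set δ : ℝ := c * (b⁻¹)^2 * (t - s) / ((1 + c * t * a⁻¹) * (1 + c * s * a⁻¹)) with hδ
  have hd1 : (0:ℝ) < 1 + c * t * a⁻¹ := denom_pos hc ht (inv_pos.mpr ha)
  have hd2 : (0:ℝ) < 1 + c * s * a⁻¹ := denom_pos hc hs (inv_pos.mpr ha)
  have hδpos : 0 < δ := div_pos (mul_pos (by positivity) hts) (mul_pos hd1 hd2)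
  have key := integral_mono (μ := μ) ((intg_phi hXm ha hX hc hs).add (integrable_const δ))
    (intg_phi hXm ha hX hc ht)
    (fun ω => by
      obtain ⟨hy, hyp, hyq⟩ := ybnd ha hX ω
      exact phi_strict_mono hc hs hst (inv_pos.mpr hb) hyp hyq)
  simp only [Pi.add_apply] at key
  rw [integral_add (intg_phi hXm ha hX hc hs) (integrable_const δ)] at key
  simp only [integral_const, measure_univ, ENNReal.toReal_one, probReal_univ, one_smul] at key
  linarith

lemma int_f_ratio (hXm : Measurable X) (ha : 0 < a) (hb : 0 < b)
    (hX : ∀ ω, X ω ∈ Set.Icc a b) (hc : 0 < c) (hs : 0 < s) (hst : s < t) :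
    s * ∫ ω, phi c t ((X ω)⁻¹) ∂μ < t * ∫ ω, phi c s ((X ω)⁻¹) ∂μ := by
  have ht : 0 < t := hs.trans hst
  have hts : (0:ℝ) < t - s := by linarith
  set δ : ℝ := c^2 * s * t * (b⁻¹)^3 * (t - s) / ((1 + c * t * a⁻¹) * (1 + c * s * a⁻¹)) with hδ
  have hd1 : (0:ℝ) < 1 + c * t * a⁻¹ := denom_pos hc ht.le (inv_pos.mpr ha)
  have hd2 : (0:ℝ) < 1 + c * s * a⁻¹ := denom_pos hc hs.le (inv_pos.mpr ha)
  have hδpos : 0 < δ := div_pos (mul_pos (by positivity) hts) (mul_pos hd1 hd2)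
  have key := integral_mono (μ := μ)
    (((intg_phi hXm ha hX hc ht.le).const_mul s).add (integrable_const δ))
    ((intg_phi hXm ha hX hc hs.le).const_mul t)
    (fun ω => by
      obtain ⟨hy, hyp, hyq⟩ := ybnd ha hX ω
      exact phi_ratio hc hs hst (inv_pos.mpr hb) hyp hyq)
  simp only [Pi.add_apply] at key
  rw [integral_add ((intg_phi hXm ha hX hc ht.le).const_mul s) (integrable_const δ),
    MeasureTheory.integral_const_mul, MeasureTheory.integral_const_mul] at key
  simp only [integral_const, measure_univ, ENNReal.toReal_one, probReal_univ, one_smul] at key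
  linarith

lemma int_f_lip (hXm : Measurable X) (ha : 0 < a) (hX : ∀ ω, X ω ∈ Set.Icc a b)
    (hc : 0 < c) (ht : 0 ≤ t) (hs : 0 ≤ s) :
    |(∫ ω, phi c t ((X ω)⁻¹) ∂μ) - ∫ ω, phi c s ((X ω)⁻¹) ∂μ| ≤ c * (a⁻¹)^2 * |t - s| := by
  rw [← integral_sub (intg_phi hXm ha hX hc ht) (intg_phi hXm ha hX hc hs)]
  have h := norm_integral_le_of_norm_le_const (μ := μ) (C := c * (a⁻¹)^2 * |t - s|)
    (ae_of_all μ fun ω => by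
      obtain ⟨hy, hyp, hyq⟩ := ybnd ha hX ω
      rw [Real.norm_eq_abs]
      exact phi_lip hc ht hs hy hyq)
  simpa [measure_univ, Real.norm_eq_abs] using h

lemma int_sq_lb (hXm : Measurable X) (ha : 0 < a) (hb : 0 < b)
    (hX : ∀ ω, X ω ∈ Set.Icc a b) :
    (b⁻¹)^2 ≤ ∫ ω, ((X ω)⁻¹)^2 ∂μ := by
  have h2 := integral_mono (μ := μ) (integrable_const ((b⁻¹)^2)) (intg_sq hXm ha hX)
    (fun ω => by
      obtain ⟨hy, hyp, hyq⟩ := ybnd ha hX ω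
      gcongr <;> exact (inv_pos.mpr hb).le)
  simpa using h2

lemma int_sq_pos (hXm : Measurable X) (ha : 0 < a) (hb : 0 < b)
    (hX : ∀ ω, X ω ∈ Set.Icc a b) :
    0 < ∫ ω, ((X ω)⁻¹)^2 ∂μ :=
  lt_of_lt_of_le (by positivity) (int_sq_lb hXm ha hb hX)

end integral2
set_option maxHeartbeats 2000000 in
theorem stmt2 {Ω₁ Ω₂ : Type*} [MeasurableSpace Ω₁] [MeasurableSpace Ω₂]
    (μ₁ : Measure Ω₁) (μ₂ : Measure Ω₂)
    [IsProbabilityMeasure μ₁] [IsProbabilityMeasure μ₂]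
    (Xi : Ω₁ → ℝ) (Sg : Ω₂ → ℝ) (hXi : Measurable Xi) (hSg : Measurable Sg)
    (a b : ℝ) (ha : 0 < a)
    (hXiab : ∀ ω, Xi ω ∈ Set.Icc a b) (hSgab : ∀ ω, Sg ω ∈ Set.Icc a b)
    (α γ : ℝ) (hα : 0 < α) (hγ : 0 < γ)
    (F G : ℝ → ℝ → ℝ)
    (hF : ∀ qu qv, F qu qv =
      ∫ ω, (α * γ * qv * ((Xi ω)⁻¹)^2) / (1 + α * γ * qv * (Xi ω)⁻¹) ∂μ₁)
    (hG : ∀ qu qv, G qu qv =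
      ∫ ω, (γ * qu * ((Sg ω)⁻¹)^2) / (1 + γ * qu * (Sg ω)⁻¹) ∂μ₂) :
    ((0:ℝ) = F 0 0 ∧ (0:ℝ) = G 0 0) ∧
    ((∃ qu qv : ℝ, 0 < qu ∧ 0 < qv ∧ qu = F qu qv ∧ qv = G qu qv) ↔
      1 < α * γ^2 * (∫ ω, ((Sg ω)⁻¹)^2 ∂μ₂) * (∫ ω, ((Xi ω)⁻¹)^2 ∂μ₁)) ∧
    (1 < α * γ^2 * (∫ ω, ((Sg ω)⁻¹)^2 ∂μ₂) * (∫ ω, ((Xi ω)⁻¹)^2 ∂μ₁) →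
      ∃! p : ℝ × ℝ, 0 < p.1 ∧ 0 < p.2 ∧ p.1 = F p.1 p.2 ∧ p.2 = G p.1 p.2) := by
  -- basic positivity facts
  have hΩ₁ : Nonempty Ω₁ := MeasureTheory.Measure.nonempty_of_neZero μ₁
  obtain ⟨ω₀⟩ := hΩ₁
  have hb : 0 < b := lt_of_lt_of_le (lt_of_lt_of_le ha (hXiab ω₀).1) (hXiab ω₀).2
  have hc₁ : 0 < α * γ := mul_pos hα hγ
  have hainv : 0 < a⁻¹ := inv_pos.mpr ha
  -- rewrite F, G in terms of phi
  have hFeq : ∀ qu qv : ℝ, F qu qv = ∫ ω, phi (α*γ) qv ((Xi ω)⁻¹) ∂μ₁ := by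
    intro qu qv; rw [hF qu qv]; rfl
  have hGeq : ∀ qu qv : ℝ, G qu qv = ∫ ω, phi γ qu ((Sg ω)⁻¹) ∂μ₂ := by
    intro qu qv; rw [hG qu qv]; rfl
  set E₁ : ℝ := ∫ ω, ((Xi ω)⁻¹)^2 ∂μ₁ with hE₁def
  set E₂ : ℝ := ∫ ω, ((Sg ω)⁻¹)^2 ∂μ₂ with hE₂def
  set f : ℝ → ℝ := fun t => ∫ ω, phi (α*γ) t ((Xi ω)⁻¹) ∂μ₁ with hfdef
  set g : ℝ → ℝ := fun t => ∫ ω, phi γ t ((Sg ω)⁻¹) ∂μ₂ with hgdef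
  have hE₁pos : 0 < E₁ := int_sq_pos hXi ha hb hXiab
  have hE₂pos : 0 < E₂ := int_sq_pos hSg ha hb hSgab
  -- specialized facts
  have hf0 : f 0 = 0 := int_f_zero
  have hg0 : g 0 = 0 := int_f_zero
  have hgnn : ∀ t : ℝ, 0 ≤ t → 0 ≤ g t := fun t ht => int_f_nonneg ha hSgab hγ ht
  have hgmono : ∀ s t : ℝ, 0 ≤ s → s < t → g s < g t :=
    fun s t hs hst => int_f_strict_mono hSg ha hb hSgab hγ hs hst
  have hfmono : ∀ s t : ℝ, 0 ≤ s → s < t → f s < f t :=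
    fun s t hs hst => int_f_strict_mono hXi ha hb hXiab hc₁ hs hst
  have hfratio : ∀ s t : ℝ, 0 < s → s < t → s * f t < t * f s :=
    fun s t hs hst => int_f_ratio hXi ha hb hXiab hc₁ hs hst
  have hgratio : ∀ s t : ℝ, 0 < s → s < t → s * g t < t * g s :=
    fun s t hs hst => int_f_ratio hSg ha hb hSgab hγ hs hst
  have hgle : ∀ t : ℝ, 0 ≤ t → g t ≤ γ*t*E₂ :=
    fun t ht => int_f_le_lin hSg ha hSgab hγ ht
  have hgquad : ∀ t : ℝ, 0 ≤ t → γ*t*E₂ - γ^2*t^2*(a⁻¹)^3 ≤ g t :=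
    fun t ht => int_f_ge_quad hSg ha hSgab hγ ht
  have hfquad : ∀ s : ℝ, 0 ≤ s → (α*γ)*s*E₁ - (α*γ)^2*s^2*(a⁻¹)^3 ≤ f s :=
    fun s hs => int_f_ge_quad hXi ha hXiab hc₁ hs
  have hfbound : ∀ s : ℝ, 0 ≤ s → f s ≤ a⁻¹ :=
    fun s hs => int_f_le_bound hXi ha hXiab hc₁ hs
  have hflip : ∀ t s : ℝ, 0 ≤ t → 0 ≤ s → |f t - f s| ≤ (α*γ)*(a⁻¹)^2*|t-s| :=
    fun t s ht hs => int_f_lip hXi ha hXiab hc₁ ht hs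
  have hglip : ∀ t s : ℝ, 0 ≤ t → 0 ≤ s → |g t - g s| ≤ γ*(a⁻¹)^2*|t-s| :=
    fun t s ht hs => int_f_lip hSg ha hSgab hγ ht hs
  have hflt : ∀ t : ℝ, 0 < t → f t < α*γ*t*E₁ := by
    intro t ht
    exact int_f_lt_lin (μ := μ₁) hXi ha hb hXiab hc₁ ht
  have hglt : ∀ t : ℝ, 0 < t → g t < γ*t*E₂ := by
    intro t ht
    exact int_f_lt_lin (μ := μ₂) hSg ha hb hSgab hγ ht
  have hFf : ∀ qu qv : ℝ, F qu qv = f qv := fun qu qv => hFeq qu qv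
  have hGf : ∀ qu qv : ℝ, G qu qv = g qu := fun qu qv => hGeq qu qv
  clear hFeq hGeq hfdef hgdef hE₁def hE₂def hF hG
  clear_value f g E₁ E₂
  -- the key existence statement
  have hexist : 1 < α * γ^2 * E₂ * E₁ →
      ∃ qu qv : ℝ, 0 < qu ∧ 0 < qv ∧ qu = F qu qv ∧ qv = G qu qv := by
    intro hK
    have hK1 : 0 < α * γ^2 * E₂ * E₁ - 1 := by linarith
    obtain ⟨C, hCdef⟩ : ∃ C : ℝ, C = α*γ*E₁*γ^2*(a⁻¹)^3 + (α*γ)^2*γ^2*E₂^2*(a⁻¹)^3 := ⟨_, rfl⟩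
    have hCpos : 0 < C := by rw [hCdef]; positivity
    have hlow : ∀ t : ℝ, 0 ≤ t → α*γ^2*E₂*E₁*t - C*t^2 ≤ f (g t) := by
      intro t htt
      have hs0 : 0 ≤ g t := hgnn t htt
      have hsub : g t ≤ γ*t*E₂ := hgle t htt
      have hslb : γ*t*E₂ - γ^2*t^2*(a⁻¹)^3 ≤ g t := hgquad t htt
      have h3 : (α*γ)*(g t)*E₁ - (α*γ)^2*(g t)^2*(a⁻¹)^3 ≤ f (g t) := hfquad (g t) hs0
      have h1 : α*γ*E₁*(γ*t*E₂ - γ^2*t^2*(a⁻¹)^3) ≤ α*γ*E₁*(g t) :=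
        mul_le_mul_of_nonneg_left hslb (by positivity)
      have h2 : (g t)^2 ≤ (γ*t*E₂)^2 := pow_le_pow_left₀ hs0 hsub 2
      have h4 : (α*γ)^2*(a⁻¹)^3*(g t)^2 ≤ (α*γ)^2*(a⁻¹)^3*(γ*t*E₂)^2 :=
        mul_le_mul_of_nonneg_left h2 (by positivity)
      have hCt : C*t^2 = α*γ*E₁*γ^2*(a⁻¹)^3*t^2 + (α*γ)^2*γ^2*E₂^2*(a⁻¹)^3*t^2 := by
        rw [hCdef]; ring
      nlinarith [h1, h3, h4, hCt]
    obtain ⟨t₀, ht₀def⟩ : ∃ t₀ : ℝ, t₀ = min ((α * γ^2 * E₂ * E₁ - 1)/(2*C)) a⁻¹ := ⟨_, rfl⟩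
    have ht₀pos : 0 < t₀ := by
      rw [ht₀def]
      exact lt_min (by positivity) hainv
    have hCt₀ : C * t₀ ≤ (α * γ^2 * E₂ * E₁ - 1)/2 := by
      have h5 : C * t₀ ≤ C * ((α * γ^2 * E₂ * E₁ - 1)/(2*C)) := by
        rw [ht₀def]
        exact mul_le_mul_of_nonneg_left (min_le_left _ _) hCpos.le
      have h6 : C * ((α * γ^2 * E₂ * E₁ - 1)/(2*C)) = (α * γ^2 * E₂ * E₁ - 1)/2 := by
        have hC0 : C ≠ 0 := hCpos.ne'
        field_simp
      linarith
    have hlowt₀ : t₀ < f (g t₀) := by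
      have := hlow t₀ ht₀pos.le
      have h5 : C*t₀*t₀ ≤ (α * γ^2 * E₂ * E₁ - 1)/2 * t₀ :=
        mul_le_mul_of_nonneg_right hCt₀ ht₀pos.le
      nlinarith [mul_pos hK1 ht₀pos]
    obtain ⟨T, hTdef⟩ : ∃ T : ℝ, T = a⁻¹ + 1 := ⟨_, rfl⟩
    have ht₀T : t₀ ≤ T := by
      rw [ht₀def, hTdef]
      exact le_trans (min_le_right _ _) (by linarith)
    have hTnn : (0:ℝ) ≤ T := by rw [hTdef]; linarith
    have hTup : f (g T) < T := by
      have h8 := hfbound (g T) (hgnn T hTnn)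
      linarith [hTdef.le, hTdef.ge]
    -- continuity of t ↦ f (g t) - t on [t₀, T]
    have hHcont : ContinuousOn (fun t => f (g t) - t) (Set.Icc t₀ T) := by
      rw [Metric.continuousOn_iff]
      intro x hx ε hε
      obtain ⟨L, hLdef⟩ : ∃ L : ℝ, L = (α*γ)*(a⁻¹)^2 * (γ*(a⁻¹)^2) + 1 := ⟨_, rfl⟩
      have hLpos : 0 < L := by rw [hLdef]; positivity
      refine ⟨ε/L, by positivity, fun y hy hxy => ?_⟩
      have hx0 : 0 ≤ x := le_trans ht₀pos.le hx.1
      have hy0 : 0 ≤ y := le_trans ht₀pos.le hy.1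
      have e1 : |g y - g x| ≤ γ*(a⁻¹)^2*|y-x| := hglip y x hy0 hx0
      have e2 : |f (g y) - f (g x)| ≤ (α*γ)*(a⁻¹)^2*|g y - g x| :=
        hflip (g y) (g x) (hgnn y hy0) (hgnn x hx0)
      have e2' : |f (g y) - f (g x)| ≤ (α*γ)*(a⁻¹)^2 * (γ*(a⁻¹)^2) * |y-x| := by
        calc |f (g y) - f (g x)| ≤ (α*γ)*(a⁻¹)^2*|g y - g x| := e2
          _ ≤ (α*γ)*(a⁻¹)^2 * (γ*(a⁻¹)^2*|y-x|) :=
              mul_le_mul_of_nonneg_left e1 (by positivity)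
          _ = (α*γ)*(a⁻¹)^2 * (γ*(a⁻¹)^2) * |y-x| := by ring
      rw [Real.dist_eq] at hxy ⊢
      have etri : |f (g y) - y - (f (g x) - x)| ≤ |f (g y) - f (g x)| + |y - x| := by
        have hid : f (g y) - y - (f (g x) - x) = (f (g y) - f (g x)) - (y - x) := by ring
        rw [hid]
        exact abs_sub _ _
      have hLmul : L * |y - x| < L * (ε/L) := by
        apply mul_lt_mul_of_pos_left _ hLpos
        exact hxy
      have hLe : L * (ε/L) = ε := by field_simp
      have hLsplit : (α*γ)*(a⁻¹)^2 * (γ*(a⁻¹)^2) * |y-x| + |y-x| = L * |y-x| := by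
        rw [hLdef]; ring
      calc |f (g y) - y - (f (g x) - x)| ≤ |f (g y) - f (g x)| + |y - x| := etri
        _ ≤ (α*γ)*(a⁻¹)^2 * (γ*(a⁻¹)^2) * |y-x| + |y-x| := by linarith
        _ = L * |y-x| := hLsplit
        _ < L * (ε/L) := hLmul
        _ = ε := hLe
    have hsub : Set.Icc (f (g T) - T) (f (g t₀) - t₀) ⊆
        (fun t => f (g t) - t) '' Set.Icc t₀ T := intermediate_value_Icc' ht₀T hHcont
    have h0mem : (0:ℝ) ∈ Set.Icc (f (g T) - T) (f (g t₀) - t₀) :=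
      ⟨by linarith, by linarith⟩
    obtain ⟨tstar, htmem, htfix⟩ := hsub h0mem
    have hqu : 0 < tstar := ht₀pos.trans_le htmem.1
    have hqv : 0 < g tstar := by
      have := hgmono 0 tstar le_rfl hqu
      rwa [hg0] at this
    refine ⟨tstar, g tstar, hqu, hqv, ?_, ?_⟩
    · rw [hFf]
      simp only at htfix
      linarith
    · rw [hGf]
  refine ⟨⟨?_, ?_⟩, ⟨?_, ?_⟩, ?_⟩
  · rw [hFf, hf0]
  · rw [hGf, hg0]
  · -- mp of iff
    rintro ⟨qu, qv, hqu, hqv, h1, h2⟩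
    rw [hFf] at h1
    rw [hGf] at h2
    have l1 : qu < α*γ*qv*E₁ := h1 ▸ hflt qv hqv
    have l2 : qv < γ*qu*E₂ := h2 ▸ hglt qu hqu
    by_contra hle
    push_neg at hle
    have hint1 : α*γ*E₁*qv < α*γ*E₁*(γ*qu*E₂) :=
      mul_lt_mul_of_pos_left l2 (by positivity)
    have hint2 : (α*γ^2*E₂*E₁)*qu ≤ qu := mul_le_of_le_one_left hqu.le hle
    nlinarith [l1, hint1, hint2]
  · exact hexist
  · -- uniqueness
    intro hK
    obtain ⟨qu, qv, hqu, hqv, h1, h2⟩ := hexist hK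
    have hcontra : ∀ u₁ v₁ u₂ v₂ : ℝ, 0 < u₁ → 0 < v₁ → u₁ = f v₁ → v₁ = g u₁ →
        0 < u₂ → 0 < v₂ → u₂ = f v₂ → v₂ = g u₂ → u₁ < u₂ → False := by
      intro u₁ v₁ u₂ v₂ hu₁ hv₁ hue₁ hve₁ hu₂ hv₂ hue₂ hve₂ h12
      have hv : v₁ < v₂ := by
        rw [hve₁, hve₂]
        exact hgmono u₁ u₂ hu₁.le h12
      have r1 : v₁ * f v₂ < v₂ * f v₁ := hfratio v₁ v₂ hv₁ hv
      have r2 : u₁ * g u₂ < u₂ * g u₁ := hgratio u₁ u₂ hu₁ h12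
      rw [← hue₁, ← hue₂] at r1
      rw [← hve₁, ← hve₂] at r2
      nlinarith [r1, r2]
    have huniq : ∀ u₁ v₁ u₂ v₂ : ℝ, 0 < u₁ → 0 < v₁ → u₁ = f v₁ → v₁ = g u₁ →
        0 < u₂ → 0 < v₂ → u₂ = f v₂ → v₂ = g u₂ → u₁ = u₂ ∧ v₁ = v₂ := by
      intro u₁ v₁ u₂ v₂ hu₁ hv₁ hue₁ hve₁ hu₂ hv₂ hue₂ hve₂
      rcases lt_trichotomy u₁ u₂ with h | h | h
      · exact absurd (hcontra u₁ v₁ u₂ v₂ hu₁ hv₁ hue₁ hve₁ hu₂ hv₂ hue₂ hve₂ h) (by simp)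
      · refine ⟨h, ?_⟩
        rw [hve₁, hve₂, h]
      · exact absurd (hcontra u₂ v₂ u₁ v₁ hu₂ hv₂ hue₂ hve₂ hu₁ hv₁ hue₁ hve₁ h) (by simp)
    refine ⟨(qu, qv), ⟨hqu, hqv, h1, h2⟩, ?_⟩
    rintro ⟨u, v⟩ ⟨hu, hv, hu1, hv2⟩
    simp only at hu hv hu1 hv2 ⊢
    rw [hFf] at hu1 h1
    rw [hGf] at hv2 h2
    obtain ⟨he1, he2⟩ := huniq u v qu qv hu hv hu1 hv2 hqu hqv h1 h2
    exact Prod.ext he1 he2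
end

section
/- Let f, g : ℝ → ℝ be differentiable convex functions. Then for every a ∈ ℝ and a' > 0, |f'(a) − g'(a)| ≤ g'(a + a') − g'(a − a') + B/a', where B = |f(a+a') − g(a+a')| + |f(a−a') − g(a−a')| + |f(a) − g(a)|. -/
/-
For a convex function, the derivative at a point is bounded by the difference quotients on either
side of it, and these in turn by the derivatives at the far endpoints. Hence
`f' a ≤ (f (a + a') - f a) / a'`, which after replacing `f` by `g` at a cost of at most `B / a'`
is at most `g' (a + a')`; symmetrically `f' a ≥ g' (a - a') - B / a'`. Since `g'` is monotone,
`g' a` lies between the same two endpoint derivatives.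
-/

namespace ConvexOn

variable {s : Set ℝ} {f g : ℝ → ℝ} {x y f'x f'y g'y : ℝ}

theorem le_of_hasDerivAt_of_lt (hf : ConvexOn ℝ s f) (hx : x ∈ s) (hy : y ∈ s) (hxy : x < y)
    (hf'x : HasDerivAt f f'x x) (hf'y : HasDerivAt f f'y y) : f'x ≤ f'y :=
  (hf.le_slope_of_hasDerivAt hx hy hxy hf'x).trans (hf.slope_le_of_hasDerivAt hx hy hxy hf'y)

theorem sub_le_abs_sub_div_of_hasDerivAt (hf : ConvexOn ℝ s f) (hg : ConvexOn ℝ s g)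
    (hx : x ∈ s) (hy : y ∈ s) (hxy : x < y)
    (hf'x : HasDerivAt f f'x x) (hg'y : HasDerivAt g g'y y) :
    f'x - g'y ≤ (|f y - g y| + |f x - g x|) / (y - x) := by
  have hf_slope := hf.le_slope_of_hasDerivAt hx hy hxy hf'x
  have hg_slope := hg.slope_le_of_hasDerivAt hx hy hxy hg'y
  have hdiff : slope f x y - slope g x y ≤ (|f y - g y| + |f x - g x|) / (y - x) := by
    rw [slope_def_field, slope_def_field, ← sub_div]
    gcongr ?_ / _
    linarith [le_abs_self (f y - g y), neg_le_abs (f x - g x)]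
  linarith

end ConvexOn

theorem stmt7 (f g f' g' : ℝ → ℝ)
    (hf : ConvexOn ℝ Set.univ f) (hg : ConvexOn ℝ Set.univ g)
    (hf' : ∀ x, HasDerivAt f (f' x) x) (hg' : ∀ x, HasDerivAt g (g' x) x)
    (a a' : ℝ) (ha' : 0 < a') :
    |f' a - g' a| ≤ g' (a + a') - g' (a - a') +
      (|f (a + a') - g (a + a')| + |f (a - a') - g (a - a')| + |f a - g a|) / a' := by
  have hlt_right : a < a + a' := by linarith
  have hlt_left : a - a' < a := by linarith
  have upper := hf.sub_le_abs_sub_div_of_hasDerivAt hg trivial trivial hlt_right (hf' a) (hg' _)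
  have lower := hg.sub_le_abs_sub_div_of_hasDerivAt hf trivial trivial hlt_left (hg' _) (hf' a)
  rw [add_sub_cancel_left] at upper
  rw [sub_sub_cancel, abs_sub_comm (g a), abs_sub_comm (g _)] at lower
  have hg'_left := hg.le_of_hasDerivAt_of_lt trivial trivial hlt_left (hg' _) (hg' a)
  have hg'_right := hg.le_of_hasDerivAt_of_lt trivial trivial hlt_right (hg' a) (hg' _)
  have upper_le : (|f (a + a') - g (a + a')| + |f a - g a|) / a' ≤
      (|f (a + a') - g (a + a')| + |f (a - a') - g (a - a')| + |f a - g a|) / a' := by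
    gcongr ?_ / _; linarith [abs_nonneg (f (a - a') - g (a - a'))]
  have lower_le : (|f a - g a| + |f (a - a') - g (a - a')|) / a' ≤
      (|f (a + a') - g (a + a')| + |f (a - a') - g (a - a')| + |f a - g a|) / a' := by
    gcongr ?_ / _; linarith [abs_nonneg (f (a + a') - g (a + a'))]
  rw [abs_sub_le_iff]
  constructor <;> linarith
end

section
/- Let U ⊆ ℝ and f : Uⁿ → ℝ be a measurable function such that for each i there is c_i ≥ 0 with |f(x) − f(x')| ≤ c_i whenever x and x' differ only in coordinate i. If X = (X₁,…,Xₙ) has independent coordinates valued in U, then Var(f(X)) ≤ (Σ_{i=1}^n c_i²)/4. -/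
open MeasureTheory ProbabilityTheory

section Helpers

variable {α : Type*} [MeasurableSpace α]

lemma my_memLp2 (μ : Measure α) [IsFiniteMeasure μ] {g : α → ℝ} (hg : Measurable g)
    {B : ℝ} (hB : ∀ x, |g x| ≤ B) : MemLp g 2 μ :=
  MemLp.of_bound hg.aestronglyMeasurable B
    (Filter.Eventually.of_forall fun x => by simpa [Real.norm_eq_abs] using hB x)

lemma my_int (μ : Measure α) [IsFiniteMeasure μ] {g : α → ℝ} (hg : Measurable g)
    {B : ℝ} (hB : ∀ x, |g x| ≤ B) : Integrable g μ :=
  memLp_one_iff_integrable.1 <|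
    MemLp.of_bound hg.aestronglyMeasurable B
      (Filter.Eventually.of_forall fun x => by simpa [Real.norm_eq_abs] using hB x)

/-- Popoviciu-type bound: a random variable with oscillation at most `c`
has variance at most `c^2/4`. -/
lemma my_popoviciu (μ : Measure α) [IsProbabilityMeasure μ] (g : α → ℝ) (hg : Measurable g)
    (B : ℝ) (hB : ∀ ω, |g ω| ≤ B) (c : ℝ) (hosc : ∀ ω ω', |g ω - g ω'| ≤ c) :
    variance g μ ≤ c ^ 2 / 4 := by
  have hne : Nonempty α := by
    by_contra h
    rw [not_nonempty_iff] at h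
    have h1 : μ Set.univ = 1 := measure_univ
    rw [Set.univ_eq_empty_iff.mpr h] at h1
    simp at h1
  obtain ⟨ω₀⟩ := hne
  have hcnn : (0 : ℝ) ≤ c := (abs_nonneg _).trans (hosc ω₀ ω₀)
  set i := sInf (Set.range g) with hidef
  set s := sSup (Set.range g) with hsdef
  have hrne : (Set.range g).Nonempty := ⟨g ω₀, ω₀, rfl⟩
  have hbdda : BddAbove (Set.range g) := ⟨B, by rintro y ⟨ω, rfl⟩; exact (abs_le.1 (hB ω)).2⟩
  have hbddb : BddBelow (Set.range g) := ⟨-B, by rintro y ⟨ω, rfl⟩; exact (abs_le.1 (hB ω)).1⟩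
  have hle : ∀ ω, i ≤ g ω := fun ω => csInf_le hbddb ⟨ω, rfl⟩
  have hge : ∀ ω, g ω ≤ s := fun ω => le_csSup hbdda ⟨ω, rfl⟩
  have hsi : s ≤ i + c := by
    apply csSup_le hrne
    rintro y ⟨ω, rfl⟩
    have h1 : g ω - c ≤ i := by
      apply le_csInf hrne
      rintro z ⟨ω', rfl⟩
      have := abs_le.1 (hosc ω ω')
      linarith [this.2]
    linarith
  set a := (s + i) / 2 with hadef
  have key : ∀ ω, |g ω - a| ≤ c / 2 := by
    intro ω
    rw [abs_le]
    constructor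
    · have := hle ω; rw [hadef]; linarith
    · have := hge ω; rw [hadef]; linarith
  set h : α → ℝ := fun ω => g ω - a with hhdef
  have hhm : Measurable h := hg.sub measurable_const
  have hint : Integrable h μ := my_int μ hhm key
  have hsqb : ∀ ω, |h ω ^ 2| ≤ (c / 2) ^ 2 := fun ω => by
    rw [abs_pow]; exact pow_le_pow_left₀ (abs_nonneg _) (key ω) 2
  have hint2 : Integrable (fun ω => h ω ^ 2) μ := my_int μ (hhm.pow_const 2) hsqb
  have hMem : MemLp g 2 μ := my_memLp2 μ hg hB
  rw [variance_eq_sub hMem]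
  simp only [Pi.pow_apply]
  have hg_eq : ∀ ω, g ω = h ω + a := fun ω => by rw [hhdef]; ring
  have I1 : ∫ ω, g ω ∂μ = (∫ ω, h ω ∂μ) + a := by
    calc ∫ ω, g ω ∂μ = ∫ ω, (h ω + a) ∂μ := by
          apply integral_congr_ae; filter_upwards with ω; exact hg_eq ω
      _ = (∫ ω, h ω ∂μ) + a := by
          rw [integral_add hint (integrable_const a), integral_const]
          simp
  have I2 : ∫ ω, g ω ^ 2 ∂μ = (∫ ω, h ω ^ 2 ∂μ) + 2 * a * (∫ ω, h ω ∂μ) + a ^ 2 := by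
    calc ∫ ω, g ω ^ 2 ∂μ = ∫ ω, (h ω ^ 2 + 2 * a * h ω + a ^ 2) ∂μ := by
          apply integral_congr_ae; filter_upwards with ω; rw [hg_eq ω]; ring
      _ = (∫ ω, h ω ^ 2 ∂μ) + 2 * a * (∫ ω, h ω ∂μ) + a ^ 2 := by
          have ia : Integrable (fun ω => h ω ^ 2 + 2 * a * h ω) μ :=
            hint2.add (hint.const_mul (2 * a))
          rw [integral_add ia (integrable_const _), integral_add hint2 (hint.const_mul (2 * a)),
            integral_const_mul, integral_const]
          simp
  have I3 : ∫ ω, h ω ^ 2 ∂μ ≤ c ^ 2 / 4 := by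
    have hpt : ∀ ω, h ω ^ 2 ≤ c ^ 2 / 4 := by
      intro ω
      have h2 := hsqb ω
      rw [abs_of_nonneg (sq_nonneg _)] at h2
      nlinarith
    calc ∫ ω, h ω ^ 2 ∂μ ≤ ∫ _, (c ^ 2 / 4 : ℝ) ∂μ :=
          integral_mono hint2 (integrable_const _) hpt
      _ = c ^ 2 / 4 := by simp
  rw [I2, I1]
  nlinarith [sq_nonneg (∫ ω, h ω ∂μ)]

lemma my_variance_map {β : Type*} [MeasurableSpace β] (μ : Measure α) [IsProbabilityMeasure μ]
    (T : α → β) (hT : Measurable T) (g : β → ℝ) (hg : Measurable g)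
    (B : ℝ) (hB : ∀ x, |g x| ≤ B) :
    variance g (μ.map T) = variance (fun ω => g (T ω)) μ := by
  haveI : IsProbabilityMeasure (μ.map T) := Measure.isProbabilityMeasure_map hT.aemeasurable
  have hm2 : MemLp (fun ω => g (T ω)) 2 μ := my_memLp2 μ (hg.comp hT) (fun ω => hB (T ω))
  rw [variance_eq_sub (my_memLp2 (μ.map T) hg hB), variance_eq_sub hm2]
  simp only [Pi.pow_apply]
  rw [integral_map hT.aemeasurable ((hg.pow_const 2).aestronglyMeasurable),
    integral_map hT.aemeasurable hg.aestronglyMeasurable]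

end Helpers

section Telescope

lemma my_telescope {n : ℕ} (U : Set ℝ) (f : (Fin n → ℝ) → ℝ) (c : Fin n → ℝ)
    (hdiff : ∀ (i : Fin n) (x x' : Fin n → ℝ), (∀ j, x j ∈ U) → (∀ j, x' j ∈ U) →
      (∀ j, j ≠ i → x j = x' j) → |f x - f x'| ≤ c i) :
    ∀ (s : Finset (Fin n)) (x x' : Fin n → ℝ), (∀ j, x j ∈ U) → (∀ j, x' j ∈ U) →
      (∀ j, j ∉ s → x j = x' j) → |f x - f x'| ≤ ∑ i ∈ s, c i := by
  classical
  intro s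
  induction s using Finset.induction with
  | empty =>
    intro x x' hx hx' h
    have hxx : x = x' := funext fun j => h j (by simp)
    simp [hxx]
  | insert i s hi ih =>
    intro x x' hx hx' h
    set y := Function.update x i (x' i) with hydef
    have hy : ∀ j, y j ∈ U := by
      intro j
      by_cases hj : j = i
      · subst hj; rw [hydef, Function.update_self]; exact hx' j
      · rw [hydef, Function.update_of_ne hj]; exact hx j
    have h1 : |f x - f y| ≤ c i := by
      apply hdiff i x y hx hy
      intro j hj
      rw [hydef, Function.update_of_ne hj]
    have h2 : |f y - f x'| ≤ ∑ j ∈ s, c j := by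
      apply ih y x' hy hx'
      intro j hj
      by_cases hji : j = i
      · subst hji; rw [hydef, Function.update_self]
      · rw [hydef, Function.update_of_ne hji]
        exact h j (by simp [hji, hj])
    calc |f x - f x'| ≤ |f x - f y| + |f y - f x'| := abs_sub_le _ _ _
      _ ≤ c i + ∑ j ∈ s, c j := add_le_add h1 h2
      _ = ∑ j ∈ insert i s, c j := (Finset.sum_insert hi).symm

end Telescope

section IndepTail

lemma my_indep_tail {Ω : Type*} [MeasurableSpace Ω] {μ : Measure Ω} {n : ℕ}
    {X : Fin (n + 1) → Ω → ℝ}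
    (h : iIndepFun X μ) :
    iIndepFun (fun j : Fin n => X j.succ) μ := by
  classical
  rw [iIndepFun_iff_measure_inter_preimage_eq_mul] at h ⊢
  intro S sets hsets
  have key := h (S.image Fin.succ) (sets := fun i => Fin.cases Set.univ sets i) ?_
  · have h1 : (⋂ i ∈ S.image Fin.succ, X i ⁻¹' (Fin.cases Set.univ sets i)) =
        ⋂ j ∈ S, X j.succ ⁻¹' sets j := by
      rw [Finset.set_biInter_finset_image]
      apply Set.iInter_congr
      intro j
      apply Set.iInter_congr
      intro _
      rw [Fin.cases_succ]
    have h2 : (∏ i ∈ S.image Fin.succ, μ (X i ⁻¹' (Fin.cases Set.univ sets i))) =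
        ∏ j ∈ S, μ (X j.succ ⁻¹' sets j) := by
      rw [Finset.prod_image (fun a _ b _ hab => Fin.succ_injective n hab)]
      simp only [Fin.cases_succ]
    rw [← h1, ← h2]
    exact key
  · intro i hi
    simp only [Finset.mem_image] at hi
    obtain ⟨j, hj, rfl⟩ := hi
    simpa using hsets j hj

end IndepTail

section MainInduction

lemma my_ES {Ω : Type*} [MeasurableSpace Ω] (μ : Measure Ω) [IsProbabilityMeasure μ] :
    ∀ (n : ℕ) (U : Set ℝ) (f : (Fin n → ℝ) → ℝ), Measurable f →
      ∀ (B : ℝ), (∀ x, |f x| ≤ B) →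
      ∀ (c : Fin n → ℝ),
      (∀ (i : Fin n) (x x' : Fin n → ℝ), (∀ j, x j ∈ U) → (∀ j, x' j ∈ U) →
        (∀ j, j ≠ i → x j = x' j) → |f x - f x'| ≤ c i) →
      ∀ (X : Fin n → Ω → ℝ), (∀ i, Measurable (X i)) → (∀ i ω, X i ω ∈ U) →
      iIndepFun X μ →
      variance (fun ω => f fun i => X i ω) μ ≤ (∑ i, c i ^ 2) / 4 := by
  intro n
  induction n with
  | zero =>
    intro U f hf B hB c hdiff X hX hXU hInd
    have heq : (fun ω => f fun i => X i ω) = fun _ => f (fun i => i.elim0) := by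
      funext ω; congr 1; funext i; exact i.elim0
    rw [heq, variance_eq_sub (memLp_const _)]
    simp
  | succ n IH =>
    intro U f hf B hB c hdiff X hX hXU hInd
    -- notation
    set Y : Ω → (Fin n → ℝ) := fun ω j => X j.succ ω with hYdef
    have hY : Measurable Y := measurable_pi_lambda _ fun j => hX j.succ
    set π := μ.map (X 0) with hπ
    set ρ := μ.map Y with hρ
    haveI : IsProbabilityMeasure π := Measure.isProbabilityMeasure_map (hX 0).aemeasurable
    haveI : IsProbabilityMeasure ρ := Measure.isProbabilityMeasure_map hY.aemeasurable
    have hB0 : 0 ≤ B := (abs_nonneg _).trans (hB fun _ => 0)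
    set F : (Fin n → ℝ) × ℝ → ℝ := fun p => f (Fin.cons p.2 p.1) with hFdef
    have hcons : Measurable fun p : (Fin n → ℝ) × ℝ => (Fin.cons p.2 p.1 : Fin (n + 1) → ℝ) := by
      apply measurable_pi_lambda
      intro i
      refine Fin.cases ?_ ?_ i
      · simpa only [Fin.cons_zero] using measurable_snd
      · intro j
        simp only [Fin.cons_succ]; exact (measurable_pi_apply j).comp measurable_fst
    have hF : Measurable F := hf.comp hcons
    have hFB : ∀ p, |F p| ≤ B := fun p => hB _
    have hF2 : Measurable fun p : (Fin n → ℝ) × ℝ => F p ^ 2 := hF.pow_const 2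
    have hF2B : ∀ p, |F p ^ 2| ≤ B ^ 2 := fun p => by
      rw [abs_pow]; exact pow_le_pow_left₀ (abs_nonneg _) (hFB p) 2
    -- independence and joint law
    have hST : Disjoint (Finset.univ.image Fin.succ) ({0} : Finset (Fin (n + 1))) := by
      simp [Finset.disjoint_singleton_right, Fin.succ_ne_zero]
    have h0 := hInd.indepFun_finset (Finset.univ.image Fin.succ) {0} hST hX
    have hφ : Measurable fun v : ((i : (Finset.univ.image Fin.succ : Finset (Fin (n + 1)))) → ℝ) =>
        (fun j : Fin n => v ⟨j.succ, Finset.mem_image_of_mem _ (Finset.mem_univ j)⟩ : Fin n → ℝ) :=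
      measurable_pi_lambda _ fun j => measurable_pi_apply _
    have hψ : Measurable fun v : ((i : ({0} : Finset (Fin (n + 1)))) → ℝ) =>
        v ⟨0, Finset.mem_singleton_self 0⟩ := measurable_pi_apply _
    have hind : IndepFun Y (X 0) μ := h0.comp hφ hψ
    have hlaw : μ.map (fun ω => (Y ω, X 0 ω)) = ρ.prod π :=
      (indepFun_iff_map_prod_eq_prod_map_map hY.aemeasurable (hX 0).aemeasurable).1 hind
    -- the function g and g2
    set g : (Fin n → ℝ) → ℝ := fun y => ∫ x, F (y, x) ∂π with hgdef
    set g2 : (Fin n → ℝ) → ℝ := fun y => ∫ x, F (y, x) ^ 2 ∂π with hg2def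
    have hg : Measurable g := by
      apply Measurable.mono ?_ le_rfl le_rfl
      exact (StronglyMeasurable.integral_prod_right
        (f := fun y x => F (y, x)) hF.stronglyMeasurable).measurable
    have hg2m : Measurable g2 := by
      apply Measurable.mono ?_ le_rfl le_rfl
      exact (StronglyMeasurable.integral_prod_right
        (f := fun y x => F (y, x) ^ 2) hF2.stronglyMeasurable).measurable
    have hgB : ∀ y, |g y| ≤ B := by
      intro y
      have h1 := norm_integral_le_of_norm_le_const (μ := π) (f := fun x => F (y, x)) (C := B)
        (Filter.Eventually.of_forall fun x => by simpa [Real.norm_eq_abs] using hFB (y, x))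
      simpa [Real.norm_eq_abs, measure_univ] using h1
    have hg2B : ∀ y, |g2 y| ≤ B ^ 2 := by
      intro y
      have h1 := norm_integral_le_of_norm_le_const (μ := π) (f := fun x => F (y, x) ^ 2)
        (C := B ^ 2)
        (Filter.Eventually.of_forall fun x => by simpa [Real.norm_eq_abs] using hF2B (y, x))
      simpa [Real.norm_eq_abs, measure_univ] using h1
    have hconsy : ∀ y : Fin n → ℝ,
        Measurable fun ω => (Fin.cons (X 0 ω) y : Fin (n + 1) → ℝ) := by
      intro y
      apply measurable_pi_lambda
      intro i
      refine Fin.cases ?_ ?_ i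
      · simpa only [Fin.cons_zero] using hX 0
      · intro j
        simp only [Fin.cons_succ]
        exact measurable_const
    have hgm : ∀ y, g y = ∫ ω, f (Fin.cons (X 0 ω) y) ∂μ := by
      intro y
      have hmx : Measurable fun x : ℝ => F (y, x) :=
        hF.comp (measurable_const.prodMk measurable_id)
      show (∫ x, F (y, x) ∂π) = _
      rw [hπ, integral_map (hX 0).aemeasurable hmx.aestronglyMeasurable]
    have hg2m' : ∀ y, g2 y = ∫ ω, f (Fin.cons (X 0 ω) y) ^ 2 ∂μ := by
      intro y
      have hmx : Measurable fun x : ℝ => F (y, x) ^ 2 :=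
        hF2.comp (measurable_const.prodMk measurable_id)
      show (∫ x, F (y, x) ^ 2 ∂π) = _
      rw [hπ, integral_map (hX 0).aemeasurable hmx.aestronglyMeasurable]
    -- integrability on the product
    have hFint : Integrable F (ρ.prod π) := my_int _ hF hFB
    have hF2int : Integrable (fun p => F p ^ 2) (ρ.prod π) := my_int _ hF2 hF2B
    have hgint : Integrable g ρ := my_int _ hg hgB
    have hgsqb : ∀ y, |g y ^ 2| ≤ B ^ 2 := fun y => by
      rw [abs_pow]; exact pow_le_pow_left₀ (abs_nonneg _) (hgB y) 2
    have hgsqint : Integrable (fun y => g y ^ 2) ρ := my_int _ (hg.pow_const 2) hgsqb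
    have hg2int : Integrable g2 ρ := my_int _ hg2m hg2B
    -- main variance identity
    have hmain_eq : (fun ω => f fun i => X i ω) = fun ω => F (Y ω, X 0 ω) := by
      funext ω
      exact (congrArg f (Fin.cons_self_tail fun i => X i ω)).symm
    have hvar1 : variance (fun ω => f fun i => X i ω) μ = variance F (ρ.prod π) := by
      rw [hmain_eq, ← hlaw,
        my_variance_map μ (fun ω => (Y ω, X 0 ω)) (hY.prodMk (hX 0)) F hF B hFB]
    have EF : ∫ p, F p ∂(ρ.prod π) = ∫ y, g y ∂ρ := integral_prod F hFint
    have EF2 : ∫ p, F p ^ 2 ∂(ρ.prod π) = ∫ y, g2 y ∂ρ :=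
      integral_prod (fun p => F p ^ 2) hF2int
    have hdecomp : variance F (ρ.prod π) = (∫ y, (g2 y - g y ^ 2) ∂ρ) + variance g ρ := by
      rw [variance_eq_sub (my_memLp2 (ρ.prod π) hF hFB), variance_eq_sub (my_memLp2 ρ hg hgB)]
      simp only [Pi.pow_apply]
      rw [EF2, EF, integral_sub hg2int hgsqint]
      ring
    -- bound the first term
    have hVmeas : Measurable fun y => g2 y - g y ^ 2 := hg2m.sub (hg.pow_const 2)
    have hVb : ∀ y, |g2 y - g y ^ 2| ≤ B ^ 2 + B ^ 2 := fun y =>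
      (abs_sub _ _).trans (add_le_add (hg2B y) (hgsqb y))
    have hVle : ∀ y : Fin n → ℝ, (∀ j, y j ∈ U) → g2 y - g y ^ 2 ≤ c 0 ^ 2 / 4 := by
      intro y hyU
      set h : Ω → ℝ := fun ω => f (Fin.cons (X 0 ω) y) with hhd
      have hhm : Measurable h := hf.comp (hconsy y)
      have hhB : ∀ ω, |h ω| ≤ B := fun ω => hB _
      have hveq : variance h μ = g2 y - g y ^ 2 := by
        rw [variance_eq_sub (my_memLp2 μ hhm hhB)]
        simp only [Pi.pow_apply]
        rw [hgm y, hg2m' y]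
      rw [← hveq]
      apply my_popoviciu μ h hhm B hhB (c 0)
      intro ω ω'
      apply hdiff 0
      · intro j
        refine Fin.cases ?_ ?_ j
        · simpa only [Fin.cons_zero] using hXU 0 ω
        · intro k; simpa only [Fin.cons_succ] using hyU k
      · intro j
        refine Fin.cases ?_ ?_ j
        · simpa only [Fin.cons_zero] using hXU 0 ω'
        · intro k; simpa only [Fin.cons_succ] using hyU k
      · intro j hj
        obtain ⟨k, rfl⟩ := Fin.exists_succ_eq.2 hj
        simp only [Fin.cons_succ]
    have hT1 : ∫ y, (g2 y - g y ^ 2) ∂ρ ≤ c 0 ^ 2 / 4 := by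
      rw [hρ, integral_map hY.aemeasurable hVmeas.aestronglyMeasurable]
      have hintc : Integrable (fun ω => g2 (Y ω) - g (Y ω) ^ 2) μ :=
        my_int _ (hVmeas.comp hY) (fun ω => hVb (Y ω))
      calc ∫ ω, (g2 (Y ω) - g (Y ω) ^ 2) ∂μ ≤ ∫ _, (c 0 ^ 2 / 4 : ℝ) ∂μ :=
            integral_mono hintc (integrable_const _)
              (fun ω => hVle (Y ω) (fun j => hXU j.succ ω))
        _ = c 0 ^ 2 / 4 := by simp
    -- bound the second term via IH
    have hdiff' : ∀ (j : Fin n) (y y' : Fin n → ℝ), (∀ k, y k ∈ U) → (∀ k, y' k ∈ U) →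
        (∀ k, k ≠ j → y k = y' k) → |g y - g y'| ≤ (fun j : Fin n => c j.succ) j := by
      intro j y y' hy hy' hyy
      rw [hgm y, hgm y']
      have hint1 : Integrable (fun ω => f (Fin.cons (X 0 ω) y)) μ :=
        my_int _ (hf.comp (hconsy y)) (fun ω => hB _)
      have hint2 : Integrable (fun ω => f (Fin.cons (X 0 ω) y')) μ :=
        my_int _ (hf.comp (hconsy y')) (fun ω => hB _)
      rw [← integral_sub hint1 hint2]
      have hpt : ∀ ω, |f (Fin.cons (X 0 ω) y) - f (Fin.cons (X 0 ω) y')| ≤ c j.succ := by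
        intro ω
        apply hdiff j.succ
        · intro i
          refine Fin.cases ?_ ?_ i
          · simpa only [Fin.cons_zero] using hXU 0 ω
          · intro k; simpa only [Fin.cons_succ] using hy k
        · intro i
          refine Fin.cases ?_ ?_ i
          · simpa only [Fin.cons_zero] using hXU 0 ω
          · intro k; simpa only [Fin.cons_succ] using hy' k
        · intro i hi
          rcases Fin.eq_zero_or_eq_succ i with h0 | ⟨k, rfl⟩
          · subst h0; simp only [Fin.cons_zero]
          · simp only [Fin.cons_succ]
            exact hyy k (fun hk => hi (by rw [hk]))
      have h1 := norm_integral_le_of_norm_le_const (μ := μ)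
        (f := fun ω => f (Fin.cons (X 0 ω) y) - f (Fin.cons (X 0 ω) y')) (C := c j.succ)
        (Filter.Eventually.of_forall fun ω => by simpa [Real.norm_eq_abs] using hpt ω)
      simpa [Real.norm_eq_abs, measure_univ] using h1
    have hIndT : iIndepFun (fun j : Fin n => X j.succ) μ :=
      my_indep_tail hInd
    have hIH := IH U g hg B hgB (fun j => c j.succ) hdiff' (fun j => X j.succ)
      (fun j => hX j.succ) (fun j ω => hXU j.succ ω) hIndT
    have hvg : variance g ρ ≤ (∑ j : Fin n, c j.succ ^ 2) / 4 := by
      rw [hρ, my_variance_map μ Y hY g hg B hgB]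
      exact hIH
    -- combine
    rw [hvar1, hdecomp]
    have hsum : (∑ i : Fin (n + 1), c i ^ 2) / 4
        = c 0 ^ 2 / 4 + (∑ j : Fin n, c j.succ ^ 2) / 4 := by
      rw [Fin.sum_univ_succ]; ring
    rw [hsum]
    exact add_le_add hT1 hvg

end MainInduction

theorem stmt17 {Ω : Type*} [MeasurableSpace Ω] (μ : Measure Ω) [IsProbabilityMeasure μ]
    (n : ℕ) (U : Set ℝ) (f : (Fin n → ℝ) → ℝ) (hf : Measurable f)
    (c : Fin n → ℝ) (hc : ∀ i, 0 ≤ c i)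
    (hdiff : ∀ (i : Fin n) (x x' : Fin n → ℝ), (∀ j, x j ∈ U) → (∀ j, x' j ∈ U) →
      (∀ j, j ≠ i → x j = x' j) → |f x - f x'| ≤ c i)
    (X : Fin n → Ω → ℝ) (hX : ∀ i, Measurable (X i)) (hXU : ∀ i ω, X i ω ∈ U)
    (hInd : iIndepFun X μ) :
    variance (fun ω => f fun i => X i ω) μ ≤ (∑ i, c i ^ 2) / 4 := by
  have hne : Nonempty Ω := by
    by_contra h
    rw [not_nonempty_iff] at h
    have h1 : μ Set.univ = 1 := measure_univ
    rw [Set.univ_eq_empty_iff.mpr h] at h1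
    simp at h1
  obtain ⟨ω₀⟩ := hne
  set x₀ : Fin n → ℝ := fun i => X i ω₀ with hx₀
  have hx₀U : ∀ j, x₀ j ∈ U := fun j => hXU j ω₀
  set B : ℝ := |f x₀| + ∑ i, c i with hBdef
  have hB0 : 0 ≤ B := by
    have h1 : 0 ≤ ∑ i, c i := Finset.sum_nonneg fun i _ => hc i
    have h2 := abs_nonneg (f x₀)
    rw [hBdef]; linarith
  have hbound : ∀ x, (∀ j, x j ∈ U) → |f x| ≤ B := by
    intro x hx
    have h1 := my_telescope U f c hdiff Finset.univ x x₀ hx hx₀U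
      (fun j hj => absurd (Finset.mem_univ j) hj)
    have h2 := abs_sub_abs_le_abs_sub (f x) (f x₀)
    rw [hBdef]; linarith
  set f' : (Fin n → ℝ) → ℝ := fun x => max (-B) (min B (f x)) with hf'def
  have hf'm : Measurable f' := measurable_const.max (measurable_const.min hf)
  have hf'B : ∀ x, |f' x| ≤ B := by
    intro x
    rw [abs_le]
    constructor
    · exact le_max_left _ _
    · exact max_le (by linarith) (min_le_left _ _)
  have hf'eq : ∀ x, (∀ j, x j ∈ U) → f' x = f x := by
    intro x hx
    have h := abs_le.1 (hbound x hx)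
    rw [hf'def]
    simp only []
    rw [min_eq_right h.2, max_eq_right h.1]
  have hdiff' : ∀ (i : Fin n) (x x' : Fin n → ℝ), (∀ j, x j ∈ U) → (∀ j, x' j ∈ U) →
      (∀ j, j ≠ i → x j = x' j) → |f' x - f' x'| ≤ c i := by
    intro i x x' hx hx' hxx
    rw [hf'eq x hx, hf'eq x' hx']
    exact hdiff i x x' hx hx' hxx
  have hcomp : (fun ω => f fun i => X i ω) = fun ω => f' fun i => X i ω := by
    funext ω
    rw [hf'eq _ (fun j => hXU j ω)]
  rw [hcomp]
  exact my_ES μ n U f' hf'm B hf'B c hdiff' X hX hXU hInd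
end

section
/- Let I ⊆ ℝ be an interval and (f_n : I → ℝ) a sequence of convex functions converging pointwise to f. Then for every interior point t of I at which all one-sided derivatives below exist: lim_{s↑t} f'(s) ≤ liminf_n lim_{s↑t} f_n'(s) ≤ limsup_n lim_{s↓t} f_n'(s) ≤ lim_{s↓t} f'(s). -/
open Filter Topology Set MeasureTheory

/-- A convex function on a set has differentiability points frequently on both sides of an
interior point. -/
private lemma freq_diff (I : Set ℝ) (g : ℝ → ℝ) (hg : ConvexOn ℝ I g) {t : ℝ}
    (ht : t ∈ interior I) :
    (∃ᶠ x in 𝓝[<] t, DifferentiableAt ℝ g x) ∧ (∃ᶠ x in 𝓝[>] t, DifferentiableAt ℝ g x) := by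
  have hg' : ConvexOn ℝ (interior I) g := hg.subset interior_subset hg.1.interior
  have hll : LocallyLipschitzOn (interior I) g := hg'.locallyLipschitzOn isOpen_interior
  obtain ⟨K, s, hs, hK⟩ := hll ht
  rw [isOpen_interior.nhdsWithin_eq ht] at hs
  obtain ⟨ε, hε, hball⟩ := Metric.mem_nhds_iff.1 hs
  have hK' : LipschitzOnWith K g (Metric.ball t ε) := hK.mono hball
  have hae : ∀ᵐ x, x ∈ Metric.ball t ε → DifferentiableAt ℝ g x := by
    filter_upwards [hK'.ae_differentiableWithinAt_of_mem (μ := volume)] with x hx hxb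
    exact (hx hxb).differentiableAt (Metric.isOpen_ball.mem_nhds hxb)
  have key : ∀ c d : ℝ, c < d → Ioo c d ⊆ Metric.ball t ε →
      ∃ x ∈ Ioo c d, DifferentiableAt ℝ g x := by
    intro c d hcd hsub
    by_contra hcon
    push_neg at hcon
    have hsub2 : Ioo c d ⊆ {x | ¬ (x ∈ Metric.ball t ε → DifferentiableAt ℝ g x)} := by
      intro x hx
      simp only [mem_setOf_eq, Classical.not_imp]
      exact ⟨hsub hx, hcon x hx⟩
    have h0 := measure_mono_null hsub2 (ae_iff.1 hae)
    rw [Real.volume_Ioo] at h0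
    rw [ENNReal.ofReal_eq_zero] at h0
    linarith
  constructor
  · rw [frequently_iff]
    intro U hU
    obtain ⟨a, ha, haU⟩ := mem_nhdsLT_iff_exists_Ioo_subset.1 hU
    have hat : a < t := ha
    have hct : max a (t - ε) < t := max_lt hat (by linarith)
    have hsub : Ioo (max a (t - ε)) t ⊆ Metric.ball t ε := by
      intro x hx
      rw [Real.ball_eq_Ioo]
      exact ⟨lt_of_le_of_lt (le_max_right _ _) hx.1, by linarith [hx.2]⟩
    obtain ⟨x, hx, hdx⟩ := key _ _ hct hsub
    exact ⟨x, haU ⟨lt_of_le_of_lt (le_max_left _ _) hx.1, hx.2⟩, hdx⟩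
  · rw [frequently_iff]
    intro U hU
    obtain ⟨b, hb, hbU⟩ := mem_nhdsGT_iff_exists_Ioo_subset.1 hU
    have htb : t < b := hb
    have hct : t < min b (t + ε) := lt_min htb (by linarith)
    have hsub : Ioo t (min b (t + ε)) ⊆ Metric.ball t ε := by
      intro x hx
      rw [Real.ball_eq_Ioo]
      exact ⟨by linarith [hx.1], lt_of_lt_of_le hx.2 (min_le_right _ _)⟩
    obtain ⟨x, hx, hdx⟩ := key _ _ hct hsub
    exact ⟨x, hbU ⟨hx.1, lt_of_lt_of_le hx.2 (min_le_left _ _)⟩, hdx⟩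

/-- Key slope inequalities for a convex function in terms of one-sided limits of its derivative. -/
private lemma convex_key (I : Set ℝ) (g : ℝ → ℝ) (hg : ConvexOn ℝ I g) {t : ℝ}
    (ht : t ∈ interior I) {L L' : ℝ}
    (hL : Tendsto (deriv g) (𝓝[<] t) (𝓝 L)) (hL' : Tendsto (deriv g) (𝓝[>] t) (𝓝 L')) :
    (∀ a ∈ I, a < t → slope g a t ≤ L) ∧ (∀ b ∈ I, t < b → L' ≤ slope g t b) ∧
    (∀ a ∈ I, a < t → slope g a t ≤ L') ∧ (∀ b ∈ I, t < b → L ≤ slope g t b) ∧ L ≤ L' := by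
  have htI : t ∈ I := interior_subset ht
  have hcont : ContinuousAt g t := by
    have hg' : ConvexOn ℝ (interior I) g := hg.subset interior_subset hg.1.interior
    exact (hg'.continuousOn isOpen_interior).continuousAt (isOpen_interior.mem_nhds ht)
  obtain ⟨hfreqL, hfreqR⟩ := freq_diff I g hg ht
  set l₁ : Filter ℝ := 𝓝[<] t ⊓ 𝓟 {x | DifferentiableAt ℝ g x} with hl₁
  set l₂ : Filter ℝ := 𝓝[>] t ⊓ 𝓟 {x | DifferentiableAt ℝ g x} with hl₂
  haveI hne₁ : l₁.NeBot := frequently_iff_neBot.1 hfreqL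
  haveI hne₂ : l₂.NeBot := frequently_iff_neBot.1 hfreqR
  have hD₁ : ∀ᶠ x in l₁, DifferentiableAt ℝ g x :=
    eventually_mem_set.2 (mem_inf_of_right (mem_principal_self _))
  have hD₂ : ∀ᶠ x in l₂, DifferentiableAt ℝ g x :=
    eventually_mem_set.2 (mem_inf_of_right (mem_principal_self _))
  have hint₁ : ∀ᶠ x in l₁, x ∈ interior I :=
    eventually_mem_set.2 (mem_inf_of_left
      (mem_nhdsWithin_of_mem_nhds (isOpen_interior.mem_nhds ht)))
  have hint₂ : ∀ᶠ x in l₂, x ∈ interior I :=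
    eventually_mem_set.2 (mem_inf_of_left
      (mem_nhdsWithin_of_mem_nhds (isOpen_interior.mem_nhds ht)))
  have hlt₁ : ∀ᶠ x in l₁, x < t :=
    eventually_mem_set.2 (mem_inf_of_left self_mem_nhdsWithin)
  have hgt₂ : ∀ᶠ x in l₂, t < x :=
    eventually_mem_set.2 (mem_inf_of_left self_mem_nhdsWithin)
  have hderiv₁ : Tendsto (deriv g) l₁ (𝓝 L) := hL.mono_left inf_le_left
  have hderiv₂ : Tendsto (deriv g) l₂ (𝓝 L') := hL'.mono_left inf_le_left
  -- continuity of slopes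
  have hslopeL : ∀ a : ℝ, a ≠ t → ContinuousAt (fun x => slope g a x) t := by
    intro a ha
    simp only [slope_def_field]
    exact ((hcont.sub continuousAt_const).div
      (continuousAt_id.sub continuousAt_const) (sub_ne_zero.2 (Ne.symm ha)))
  have hslopeR : ∀ b : ℝ, b ≠ t → ContinuousAt (fun x => slope g x b) t := by
    intro b hb
    simp only [slope_def_field]
    exact ((continuousAt_const.sub hcont).div
      (continuousAt_const.sub continuousAt_id) (sub_ne_zero.2 hb))
  have hA : ∀ a ∈ I, a < t → slope g a t ≤ L := by
    intro a haI hat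
    have h1 : Tendsto (fun x => slope g a x) l₁ (𝓝 (slope g a t)) :=
      ((hslopeL a hat.ne).tendsto).mono_left (le_trans inf_le_left nhdsWithin_le_nhds)
    have h3 : ∀ᶠ x in l₁, slope g a x ≤ deriv g x := by
      have hIoo : Ioo a t ∈ l₁ := mem_inf_of_left (Ioo_mem_nhdsLT_of_mem ⟨hat, le_rfl⟩)
      have hgta : ∀ᶠ x in l₁, a < x := (eventually_mem_set.2 hIoo).mono fun x hx => hx.1
      filter_upwards [hD₁, hint₁, hgta] with x hdx hxint hax
      exact hg.slope_le_deriv haI (interior_subset hxint) hax hdx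
    exact le_of_tendsto_of_tendsto h1 hderiv₁ h3
  have hB : ∀ b ∈ I, t < b → L' ≤ slope g t b := by
    intro b hbI htb
    have h1 : Tendsto (fun x => slope g x b) l₂ (𝓝 (slope g t b)) :=
      ((hslopeR b htb.ne').tendsto).mono_left (le_trans inf_le_left nhdsWithin_le_nhds)
    have h3 : ∀ᶠ x in l₂, deriv g x ≤ slope g x b := by
      have hIoo : Ioo t b ∈ l₂ := mem_inf_of_left (Ioo_mem_nhdsGT_of_mem ⟨le_rfl, htb⟩)
      have hxb : ∀ᶠ x in l₂, x < b := (eventually_mem_set.2 hIoo).mono fun x hx => hx.2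
      filter_upwards [hD₂, hint₂, hxb] with x hdx hxint hxb'
      exact hg.deriv_le_slope (interior_subset hxint) hbI hxb' hdx
    exact le_of_tendsto_of_tendsto hderiv₂ h1 h3
  have hD : ∀ a ∈ I, a < t → slope g a t ≤ L' := by
    intro a haI hat
    have h1 : Tendsto (fun x => slope g a x) l₂ (𝓝 (slope g a t)) :=
      ((hslopeL a hat.ne).tendsto).mono_left (le_trans inf_le_left nhdsWithin_le_nhds)
    have h3 : ∀ᶠ x in l₂, slope g a x ≤ deriv g x := by
      filter_upwards [hD₂, hint₂, hgt₂] with x hdx hxint hgx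
      exact hg.slope_le_deriv haI (interior_subset hxint) (hat.trans hgx) hdx
    exact le_of_tendsto_of_tendsto h1 hderiv₂ h3
  have hE : ∀ b ∈ I, t < b → L ≤ slope g t b := by
    intro b hbI htb
    have h1 : Tendsto (fun x => slope g x b) l₁ (𝓝 (slope g t b)) :=
      ((hslopeR b htb.ne').tendsto).mono_left (le_trans inf_le_left nhdsWithin_le_nhds)
    have h3 : ∀ᶠ x in l₁, deriv g x ≤ slope g x b := by
      filter_upwards [hD₁, hint₁, hlt₁] with x hdx hxint hxt
      exact hg.deriv_le_slope (interior_subset hxint) hbI (hxt.trans htb) hdx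
    exact le_of_tendsto_of_tendsto hderiv₁ h1 h3
  have hC : L ≤ L' := by
    have h3 : ∀ᶠ x in l₂, L ≤ deriv g x := by
      filter_upwards [hD₂, hint₂, hgt₂] with x hdx hxint hgx
      exact le_trans (hE x (interior_subset hxint) hgx)
        (hg.slope_le_deriv htI (interior_subset hxint) hgx hdx)
    exact ge_of_tendsto hderiv₂ h3
  exact ⟨hA, hB, hD, hE, hC⟩

theorem stmt18 (I : Set ℝ) (hI : I.OrdConnected)
    (f : ℝ → ℝ) (fn : ℕ → ℝ → ℝ)
    (hfn : ∀ n, ConvexOn ℝ I (fn n)) (hf : ConvexOn ℝ I f)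
    (hconv : ∀ x ∈ I, Tendsto (fun n => fn n x) atTop (𝓝 (f x)))
    (t : ℝ) (ht : t ∈ interior I)
    (Lm Lp : ℝ) (Ln Lpn : ℕ → ℝ)
    (hLm : Tendsto (deriv f) (𝓝[<] t) (𝓝 Lm))
    (hLp : Tendsto (deriv f) (𝓝[>] t) (𝓝 Lp))
    (hLn : ∀ n, Tendsto (deriv (fn n)) (𝓝[<] t) (𝓝 (Ln n)))
    (hLpn : ∀ n, Tendsto (deriv (fn n)) (𝓝[>] t) (𝓝 (Lpn n))) :
    Lm ≤ liminf Ln atTop ∧ liminf Ln atTop ≤ limsup Lpn atTop ∧ limsup Lpn atTop ≤ Lp := by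
  have htI : t ∈ I := interior_subset ht
  obtain ⟨δ, hδ, hball⟩ := Metric.isOpen_iff.1 isOpen_interior t ht
  have haint : t - δ/2 ∈ interior I := by
    apply hball
    rw [Metric.mem_ball, Real.dist_eq, show t - δ/2 - t = -(δ/2) by ring, abs_neg,
      abs_of_pos (by linarith)]
    linarith
  have hbint : t + δ/2 ∈ interior I := by
    apply hball
    rw [Metric.mem_ball, Real.dist_eq, show t + δ/2 - t = δ/2 by ring,
      abs_of_pos (by linarith)]
    linarith
  set a := t - δ/2 with ha
  set b := t + δ/2 with hb
  have haI : a ∈ I := interior_subset haint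
  have hbI : b ∈ I := interior_subset hbint
  have hat : a < t := by rw [ha]; linarith
  have htb : t < b := by rw [hb]; linarith
  have key := fun n => convex_key I (fn n) (hfn n) ht (hLn n) (hLpn n)
  -- slope convergence
  have hslopeconv : ∀ x ∈ I, ∀ y ∈ I, x ≠ y →
      Tendsto (fun n => slope (fn n) x y) atTop (𝓝 (slope f x y)) := by
    intro x hx y hy hxy
    simp only [slope_def_field]
    exact ((hconv y hy).sub (hconv x hx)).div_const (y - x)
  have hsat : Tendsto (fun n => slope (fn n) a t) atTop (𝓝 (slope f a t)) :=
    hslopeconv a haI t htI hat.ne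
  have hstb : Tendsto (fun n => slope (fn n) t b) atTop (𝓝 (slope f t b)) :=
    hslopeconv t htI b hbI htb.ne
  -- boundedness facts
  have hLn_ub : IsBoundedUnder (· ≤ ·) atTop Ln := by
    refine ⟨slope f t b + 1, eventually_map.2 ?_⟩
    filter_upwards [hstb.eventually (eventually_le_nhds (lt_add_one _))] with n hn
    exact le_trans ((key n).2.2.2.1 b hbI htb) hn
  have hLpn_ub : IsBoundedUnder (· ≤ ·) atTop Lpn := by
    refine ⟨slope f t b + 1, eventually_map.2 ?_⟩
    filter_upwards [hstb.eventually (eventually_le_nhds (lt_add_one _))] with n hn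
    exact le_trans ((key n).2.1 b hbI htb) hn
  have hLn_lb : IsBoundedUnder (· ≥ ·) atTop Ln := by
    refine ⟨slope f a t - 1, eventually_map.2 ?_⟩
    filter_upwards [hsat.eventually (eventually_ge_nhds (sub_one_lt _))] with n hn
    exact le_trans hn ((key n).1 a haI hat)
  have hLpn_lb : IsBoundedUnder (· ≥ ·) atTop Lpn := by
    refine ⟨slope f a t - 1, eventually_map.2 ?_⟩
    filter_upwards [hsat.eventually (eventually_ge_nhds (sub_one_lt _))] with n hn
    exact le_trans hn ((key n).2.2.1 a haI hat)
  obtain ⟨hfreqL, hfreqR⟩ := freq_diff I f hf ht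
  haveI hne₁ : (𝓝[<] t ⊓ 𝓟 {x | DifferentiableAt ℝ f x}).NeBot := frequently_iff_neBot.1 hfreqL
  haveI hne₂ : (𝓝[>] t ⊓ 𝓟 {x | DifferentiableAt ℝ f x}).NeBot := frequently_iff_neBot.1 hfreqR
  refine ⟨?_, ?_, ?_⟩
  · -- Lm ≤ liminf Ln
    refine le_of_forall_pos_le_add (fun ε hε => ?_)
    set l₁ : Filter ℝ := 𝓝[<] t ⊓ 𝓟 {x | DifferentiableAt ℝ f x} with hl₁
    have hev : ∀ᶠ x in l₁, Lm - ε < deriv f x ∧ DifferentiableAt ℝ f x ∧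
        x ∈ interior I ∧ x < t := by
      have e1 : ∀ᶠ x in l₁, Lm - ε < deriv f x :=
        (hLm.mono_left inf_le_left).eventually (eventually_gt_nhds (by linarith))
      have e2 : ∀ᶠ x in l₁, DifferentiableAt ℝ f x :=
        eventually_mem_set.2 (mem_inf_of_right (mem_principal_self _))
      have e3 : ∀ᶠ x in l₁, x ∈ interior I :=
        eventually_mem_set.2 (mem_inf_of_left
          (mem_nhdsWithin_of_mem_nhds (isOpen_interior.mem_nhds ht)))
      have e4 : ∀ᶠ x in l₁, x < t :=
        eventually_mem_set.2 (mem_inf_of_left self_mem_nhdsWithin)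
      filter_upwards [e1, e2, e3, e4] with x h1 h2 h3 h4
      exact ⟨h1, h2, h3, h4⟩
    obtain ⟨s, hs1, hs2, hs3, hs4⟩ := hev.exists
    have hsI : s ∈ I := interior_subset hs3
    have h5 : Lm - ε ≤ slope f s t := (le_of_lt hs1).trans (hf.deriv_le_slope hsI htI hs4 hs2)
    have h6 : Tendsto (fun n => slope (fn n) s t) atTop (𝓝 (slope f s t)) :=
      hslopeconv s hsI t htI hs4.ne
    have h7 : slope f s t ≤ liminf Ln atTop := by
      have := liminf_le_liminf (Eventually.of_forall fun n => (key n).1 s hsI hs4)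
        h6.isBoundedUnder_ge hLn_ub.isCoboundedUnder_ge
      rwa [h6.liminf_eq] at this
    linarith
  · -- liminf Ln ≤ limsup Lpn
    calc liminf Ln atTop ≤ liminf Lpn atTop :=
          liminf_le_liminf (Eventually.of_forall fun n => (key n).2.2.2.2)
            hLn_lb hLpn_ub.isCoboundedUnder_ge
      _ ≤ limsup Lpn atTop := liminf_le_limsup hLpn_ub hLpn_lb
  · -- limsup Lpn ≤ Lp
    refine le_of_forall_pos_le_add (fun ε hε => ?_)
    set l₂ : Filter ℝ := 𝓝[>] t ⊓ 𝓟 {x | DifferentiableAt ℝ f x} with hl₂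
    have hev : ∀ᶠ x in l₂, deriv f x < Lp + ε ∧ DifferentiableAt ℝ f x ∧
        x ∈ interior I ∧ t < x := by
      have e1 : ∀ᶠ x in l₂, deriv f x < Lp + ε :=
        (hLp.mono_left inf_le_left).eventually (eventually_lt_nhds (by linarith))
      have e2 : ∀ᶠ x in l₂, DifferentiableAt ℝ f x :=
        eventually_mem_set.2 (mem_inf_of_right (mem_principal_self _))
      have e3 : ∀ᶠ x in l₂, x ∈ interior I :=
        eventually_mem_set.2 (mem_inf_of_left
          (mem_nhdsWithin_of_mem_nhds (isOpen_interior.mem_nhds ht)))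
      have e4 : ∀ᶠ x in l₂, t < x :=
        eventually_mem_set.2 (mem_inf_of_left self_mem_nhdsWithin)
      filter_upwards [e1, e2, e3, e4] with x h1 h2 h3 h4
      exact ⟨h1, h2, h3, h4⟩
    obtain ⟨u, hu1, hu2, hu3, hu4⟩ := hev.exists
    have huI : u ∈ I := interior_subset hu3
    have h5 : slope f t u ≤ Lp + ε := (hf.slope_le_deriv htI huI hu4 hu2).trans (le_of_lt hu1)
    have h6 : Tendsto (fun n => slope (fn n) t u) atTop (𝓝 (slope f t u)) :=
      hslopeconv t htI u huI hu4.ne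
    have h7 : limsup Lpn atTop ≤ slope f t u := by
      have := limsup_le_limsup (Eventually.of_forall fun n => (key n).2.1 u huI hu4)
        hLpn_lb.isCoboundedUnder_le h6.isBoundedUnder_le
      rwa [h6.limsup_eq] at this
    linarith
end
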